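/- arXiv:1403.2108 — 6 statements merged into one kernel-verified Lean document; each statement's English description precedes it below -/
import Mathlib

section
/- Let H be a real Hadamard matrix of order N ≥ 4 whose row sums S_1,…,S_N are all congruent to 0 modulo 4. Then the number of rows whose sum is congruent to 4 modulo 8 is odd if N ≡ 4 (mod 8), and even if N ≡ 0 (mod 8). -/
/-- If all row sums of a real Hadamard matrix of order `N ≥ 4` are `0` modulo `4`,
then the number of rows with sum `4` modulo `8` is odd when `N ≡ 4 (mod 8)` and even
when `N ≡ 0 (mod 8)`. -/
theorem hadamard_count_rows_four_mod_eight
    (N : ℕ) (hN : 4 ≤ N) (H : Matrix (Fin N) (Fin N) ℤ)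
    (hentries : ∀ i j, H i j = 1 ∨ H i j = -1)
    (horth : ∀ i j, i ≠ j → ∑ k, H i k * H j k = 0)
    (hrows : ∀ i, (4 : ℤ) ∣ ∑ j, H i j) :
    (N % 8 = 4 → Odd (Finset.univ.filter
        (fun i => (∑ j, H i j) % 8 = 4)).card) ∧
    (N % 8 = 0 → Even (Finset.univ.filter
        (fun i => (∑ j, H i j) % 8 = 4)).card) := by
  have hsq : ∀ i j, H i j * H i j = 1 := fun i j => by
    rcases hentries i j with h | h <;> rw [h] <;> ring
  have hHHt : H * H.transpose = (N : ℤ) • 1 := by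
    ext i j
    rw [Matrix.mul_apply]
    by_cases h : i = j
    · subst h
      simp [Matrix.transpose_apply, hsq, Matrix.one_apply]
    · simpa [Matrix.transpose_apply, Matrix.one_apply, h] using horth i j h
  have hNQ : (N : ℚ) ≠ 0 := Nat.cast_ne_zero.mpr (by omega)
  set Hq : Matrix (Fin N) (Fin N) ℚ := H.map ((↑) : ℤ → ℚ) with hHq
  have hq1 : Hq * Hq.transpose = (N : ℚ) • 1 := by
    ext i j
    have h0 := congrFun (congrFun hHHt i) j
    simp only [Matrix.mul_apply, Matrix.transpose_apply, Matrix.smul_apply,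
      Matrix.one_apply, Matrix.map_apply, hHq] at h0 ⊢
    by_cases h : i = j <;> simp only [h, if_true, if_false, smul_eq_mul,
      mul_one, mul_zero] at h0 ⊢ <;> exact_mod_cast h0
  have hinv : Hq * ((N : ℚ)⁻¹ • Hq.transpose) = 1 := by
    rw [Matrix.mul_smul, hq1, smul_smul, inv_mul_cancel₀ hNQ, one_smul]
  have hcomm := mul_eq_one_comm.mp hinv
  have h2 : Hq.transpose * Hq = (N : ℚ) • 1 := by
    have h3 : (N : ℚ) • (((N : ℚ)⁻¹ • Hq.transpose) * Hq) = (N : ℚ) • 1 := by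
      rw [hcomm]
    rwa [Matrix.smul_mul, smul_smul, mul_inv_cancel₀ hNQ, one_smul] at h3
  have hcol : ∀ j k, (∑ i, H i j * H i k) = if j = k then (N : ℤ) else 0 := by
    intro j k
    have h0 := congrFun (congrFun h2 j) k
    simp only [Matrix.mul_apply, Matrix.transpose_apply, Matrix.smul_apply,
      Matrix.one_apply, Matrix.map_apply, hHq] at h0
    by_cases h : j = k <;> simp only [h, if_true, if_false, smul_eq_mul,
      mul_one, mul_zero] at h0 ⊢ <;> exact_mod_cast h0
  have key : ∑ i, (∑ j, H i j) ^ 2 = (N : ℤ) ^ 2 := by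
    calc ∑ i, (∑ j, H i j) ^ 2
        = ∑ i, ∑ j, ∑ k, H i j * H i k := by
          refine Finset.sum_congr rfl fun i _ => ?_
          rw [sq, Finset.sum_mul_sum]
      _ = ∑ j, ∑ k, ∑ i, H i j * H i k := by
          rw [Finset.sum_comm]
          exact Finset.sum_congr rfl fun j _ => Finset.sum_comm
      _ = ∑ _j : Fin N, (N : ℤ) := by
          refine Finset.sum_congr rfl fun j _ => ?_
          simp [hcol]
      _ = (N : ℤ) ^ 2 := by
          rw [Finset.sum_const, Finset.card_univ, Fintype.card_fin,
            nsmul_eq_mul, sq]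
  have h1 : ∀ i : Fin N,
      (∑ j, H i j) ^ 2 % 32 = if (∑ j, H i j) % 8 = 4 then 16 else 0 := by
    intro i
    obtain ⟨m, hm⟩ := hrows i
    set s := ∑ j, H i j with hs
    have h8 : s % 8 = 0 ∨ s % 8 = 4 := by omega
    rcases h8 with h | h
    · have hse : s = 8 * (s / 8) := by omega
      rw [if_neg (by omega), hse]
      set q := s / 8
      have he : (8 * q) ^ 2 = 0 + 32 * (2 * q ^ 2) := by ring
      rw [he, Int.add_mul_emod_self_left]; norm_num
    · have hse : s = 8 * (s / 8) + 4 := by omega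
      rw [if_pos h, hse]
      set q := s / 8
      have he : (8 * q + 4) ^ 2 = 16 + 32 * (2 * q ^ 2 + 2 * q) := by ring
      rw [he, Int.add_mul_emod_self_left]; norm_num
  set c := (Finset.univ.filter (fun i => (∑ j, H i j) % 8 = 4)).card with hc
  have hsum : ((N : ℤ)) ^ 2 % 32 = (16 * (c : ℤ)) % 32 := by
    rw [← key, Finset.sum_int_mod]
    simp_rw [h1]
    rw [← Finset.sum_filter, Finset.sum_const, nsmul_eq_mul, mul_comm, hc]
  constructor
  · intro h4
    rw [Nat.odd_iff]
    obtain ⟨k, hk⟩ : ∃ k, N = 8 * k + 4 := ⟨N / 8, by omega⟩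
    have hN2 : ((N : ℤ)) ^ 2 % 32 = 16 := by
      have : ((N : ℤ)) ^ 2 = 16 + 32 * (2 * (k : ℤ) ^ 2 + 2 * k) := by
        rw [hk]; push_cast; ring
      rw [this, Int.add_mul_emod_self_left]; norm_num
    rw [hN2] at hsum
    omega
  · intro h0
    rw [Nat.even_iff]
    obtain ⟨k, hk⟩ : ∃ k, N = 8 * k := ⟨N / 8, by omega⟩
    have hN2 : ((N : ℤ)) ^ 2 % 32 = 0 := by
      have : ((N : ℤ)) ^ 2 = 0 + 32 * (2 * (k : ℤ) ^ 2) := by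
        rw [hk]; push_cast; ring
      rw [this, Int.add_mul_emod_self_left]; norm_num
    rw [hN2] at hsum
    omega
end

section
/- Let H be a real Hadamard matrix of order N ≥ 4, and let H' be obtained from H by switching the signs of two columns (multiplying two columns by -1). If all row sums of H are divisible by 4, then all row sums of H' are divisible by 4, and the parity of the number of rows with row sum ≡ 4 (mod 8) is the same for H and H'. -/
/-!
If `H` is a `±1` matrix of order `N` with orthogonal rows, then also `Hᵀ * H = N • 1`, so the
row sums `sᵢ = (H *ᵥ 1) i` satisfy `∑ sᵢ² = ‖H *ᵥ 1‖² = N²`. When every `sᵢ` is divisible by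
`4`, `sᵢ² ≡ 16` or `0 (mod 32)` according as `sᵢ ≡ 4` or `0 (mod 8)`, so the parity of the number
of rows with `sᵢ ≡ 4 (mod 8)` is determined by `N² mod 32` alone. Switching the signs of two
columns multiplies `H` by a diagonal `±1` matrix, which keeps it Hadamard, and changes each row
sum by twice the sum of two entries `±1`, a multiple of `4`.
-/

open Finset Matrix

variable {n R : Type*} [Fintype n] [DecidableEq n]

namespace Matrix

theorem isHadamard_of_orthogonal_rows [CommRing R] [StarRing R] [TrivialStar R]
    [NoZeroDivisors R] {A : Matrix n n R} (hcard : IsRegular (Fintype.card n : R))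
    (hentries : ∀ i j, A i j = 1 ∨ A i j = -1)
    (horth : ∀ i j, i ≠ j → ∑ k, A i k * A j k = 0) : A.IsHadamard := by
  refine .of_mul_conjTranspose (fun i j => Unitary.mem_iff_eq_one_or_eq_neg_one.mpr
    (hentries i j)) ?_ hcard
  ext i j
  simp only [mul_apply, conjTranspose_apply, star_trivial, smul_apply, one_apply, smul_eq_mul]
  split_ifs with hij
  · subst hij
    have hsq : ∀ k, A i k * A i k = 1 := fun k => by rcases hentries i k with h | h <;> simp [h]
    simp [hsq]
  · simpa using horth i j hij

theorem IsHadamard.mul_diagonal [CommRing R] [StarRing R] {A : Matrix n n R}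
    (hA : A.IsHadamard) {d : n → R} (hd : ∀ k, d k ∈ unitary R) :
    (A * diagonal d).IsHadamard := by
  have hdiag : diagonal d * (diagonal d)ᴴ = 1 ∧ (diagonal d)ᴴ * diagonal d = 1 := by
    simp only [diagonal_conjTranspose, diagonal_mul_diagonal, ← diagonal_one]
    exact ⟨congrArg diagonal (funext fun k => Unitary.mul_star_self_of_mem (hd k)),
      congrArg diagonal (funext fun k => Unitary.star_mul_self_of_mem (hd k))⟩
  refine ⟨fun i j => ?_, ?_, ?_⟩
  · rw [Matrix.mul_diagonal]
    exact mul_mem (hA.apply_mem i j) (hd j)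
  · rw [Matrix.conjTranspose_mul, Matrix.mul_assoc, ← Matrix.mul_assoc (diagonal d), hdiag.1,
      Matrix.one_mul, hA.mul_conjTranspose]
  · rw [Matrix.conjTranspose_mul, Matrix.mul_assoc, ← Matrix.mul_assoc Aᴴ, hA.conjTranspose_mul,
      Matrix.smul_mul, Matrix.one_mul, Matrix.mul_smul, hdiag.2]

theorem IsHadamard.sum_sq_sum_row [CommSemiring R] [StarRing R] [TrivialStar R]
    {A : Matrix n n R} (hA : A.IsHadamard) :
    ∑ i, (∑ j, A i j) ^ 2 = (Fintype.card n : R) ^ 2 := by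
  calc ∑ i, (∑ j, A i j) ^ 2 = ∑ j, ∑ k, (Aᵀ * A) j k := by
        simp only [sq, sum_mul_sum, mul_apply, transpose_apply]
        rw [sum_comm]
        exact sum_congr rfl fun _ _ => sum_comm
    _ = (Fintype.card n : R) ^ 2 := by
        rw [← conjTranspose_eq_transpose_of_trivial, hA.conjTranspose_mul]
        simp [one_apply, sq]

end Matrix

namespace Int

theorem sq_modEq_of_four_dvd {x : ℤ} (hx : 4 ∣ x) :
    x ^ 2 ≡ 16 * if x % 8 = 4 then 1 else 0 [ZMOD 32] := by
  obtain ⟨t, rfl⟩ := hx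
  obtain ⟨u, rfl | rfl⟩ := t.even_or_odd'
  · rw [if_neg (by omega), modEq_iff_dvd]
    exact ⟨-2 * u ^ 2, by ring⟩
  · rw [if_pos (by omega), modEq_iff_dvd]
    exact ⟨-2 * u ^ 2 - 2 * u, by ring⟩

theorem sum_sq_modEq_card_filter {ι : Type*} {s : Finset ι} {f : ι → ℤ}
    (hf : ∀ i ∈ s, 4 ∣ f i) :
    ∑ i ∈ s, f i ^ 2 ≡ 16 * #{i ∈ s | f i % 8 = 4} [ZMOD 32] := by
  rw [natCast_card_filter, mul_sum]
  exact ModEq.sum fun i hi => sq_modEq_of_four_dvd (hf i hi)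

theorem sum_mul_sign_modEq_four {v : n → ℤ} {S : Finset n}
    (hv : ∀ j, v j = 1 ∨ v j = -1) (hS : Even #S) :
    ∑ j, v j * (if j ∈ S then -1 else 1) ≡ ∑ j, v j [ZMOD 4] := by
  have hterm : ∀ j, v j * (if j ∈ S then -1 else 1) = v j - 2 * if j ∈ S then v j else 0 :=
    fun j => by split_ifs <;> ring
  have hpar : ∑ j ∈ S, v j ≡ #S [ZMOD 2] := by
    rw [cast_card]
    exact ModEq.sum fun j _ => by rcases hv j with h | h <;> simp [h, Int.ModEq]
  obtain ⟨m, hm⟩ := hS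
  rw [sum_congr rfl fun j _ => hterm j, sum_sub_distrib, ← mul_sum, sum_ite_mem, univ_inter]
  unfold Int.ModEq at hpar ⊢
  omega

end Int

theorem hadamard_double_column_switch_general
    (N : ℕ) (H : Matrix (Fin N) (Fin N) ℤ)
    (hentries : ∀ i j, H i j = 1 ∨ H i j = -1)
    (horth : ∀ i j, i ≠ j → ∑ k, H i k * H j k = 0)
    (hrows : ∀ i, (4 : ℤ) ∣ ∑ j, H i j)
    (c₁ c₂ : Fin N) (hc : c₁ ≠ c₂)
    (H' : Matrix (Fin N) (Fin N) ℤ)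
    (hH' : ∀ i k, H' i k = if k = c₁ ∨ k = c₂ then -H i k else H i k) :
    (∀ i, (4 : ℤ) ∣ ∑ j, H' i j) ∧
    (Finset.univ.filter (fun i => (∑ j, H i j) % 8 = 4)).card % 2 =
      (Finset.univ.filter (fun i => (∑ j, H' i j) % 8 = 4)).card % 2 := by
  have : Nonempty (Fin N) := ⟨c₁⟩
  have hH : H.IsHadamard := isHadamard_of_orthogonal_rows
    (.of_ne_zero (Nat.cast_ne_zero.mpr Fintype.card_ne_zero)) hentries horth
  set S : Finset (Fin N) := {c₁, c₂}
  have hH'_eq : H' = H * diagonal fun k => if k ∈ S then -1 else 1 := by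
    ext i k
    rw [hH', mul_diagonal]
    split_ifs <;> simp_all [S]
  have hH'_had : H'.IsHadamard := hH'_eq ▸ hH.mul_diagonal fun k =>
    Unitary.mem_iff_eq_one_or_eq_neg_one.mpr (by split_ifs <;> simp)
  have hS : Even #S := by rw [card_pair hc]; exact even_two
  have hrows' : ∀ i, (4 : ℤ) ∣ ∑ j, H' i j := fun i => by
    simpa only [hH'_eq, mul_diagonal] using
      (Int.sum_mul_sign_modEq_four (hentries i) hS).dvd_iff.mpr (hrows i)
  refine ⟨hrows', ?_⟩
  have hH_sq := Int.sum_sq_modEq_card_filter (s := univ) fun i _ => hrows i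
  have hH'_sq := Int.sum_sq_modEq_card_filter (s := univ) fun i _ => hrows' i
  rw [hH.sum_sq_sum_row] at hH_sq
  rw [hH'_had.sum_sq_sum_row] at hH'_sq
  unfold Int.ModEq at hH_sq hH'_sq
  omega

/-- Switching the signs of two columns of a real Hadamard matrix of order `N ≥ 4`
whose row sums are all divisible by `4` preserves divisibility by `4` of all row
sums, and preserves the parity of the number of rows with row sum `4` modulo `8`. -/
theorem hadamard_double_column_switch
    (N : ℕ) (hN : 4 ≤ N) (H : Matrix (Fin N) (Fin N) ℤ)
    (hentries : ∀ i j, H i j = 1 ∨ H i j = -1)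
    (horth : ∀ i j, i ≠ j → ∑ k, H i k * H j k = 0)
    (hrows : ∀ i, (4 : ℤ) ∣ ∑ j, H i j)
    (c₁ c₂ : Fin N) (hc : c₁ ≠ c₂)
    (H' : Matrix (Fin N) (Fin N) ℤ)
    (hH' : ∀ i k, H' i k = if k = c₁ ∨ k = c₂ then -H i k else H i k) :
    (∀ i, (4 : ℤ) ∣ ∑ j, H' i j) ∧
    (Finset.univ.filter (fun i => (∑ j, H i j) % 8 = 4)).card % 2 =
      (Finset.univ.filter (fun i => (∑ j, H' i j) % 8 = 4)).card % 2 :=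
  hadamard_double_column_switch_general N H hentries horth hrows c₁ c₂ hc H' hH'
end

section
/- For any real Hadamard matrix H ∈ M_N({±1}), the normalized glow moments satisfy E[(φ/N)^{2p}] = (2p-1)!! + O(1/N), where φ(a,b) = Σ_{ij} a_i b_j H_{ij} and (a,b) is uniform on {±1}^N × {±1}^N. Consequently φ/N converges in moments to a standard real Gaussian as N → ∞. -/
/-!
Fix the sign vector `ε` and put `c = (sgn ∘ ε) ᵥ* H`, so that `φ = ∑ⱼ δⱼ cⱼ`. Averaging over
`δ` with the multinomial theorem gives `∑ₖ multinomial (2k) ∏ⱼ cⱼ^(2kⱼ)` over `|k| = p`. Its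
coefficients never exceed those of `(2p-1)‼ (∑ⱼ cⱼ²)^p = (2p-1)‼ ∑ₖ multinomial k ∏ⱼ cⱼ^(2kⱼ)`
and agree with them unless some `kⱼ ≥ 2`, so the difference is at most a constant times
`∑ⱼ cⱼ⁴ (∑ⱼ cⱼ²)^(p-2)`. Orthogonality of the rows of `H` gives `∑ⱼ cⱼ² = N²`, and the same
moment bound for `p = 2`, now averaging over `ε`, gives `𝔼 cⱼ⁴ ≤ 3N²`; hence the relative error
is `O(N³ / N⁴)`.
-/

open Finset

/-- Sign of a boolean switch. -/
def sgn (b : Bool) : ℝ := if b then 1 else -1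

open Nat
open scoped BigOperators

-- At `p = 0` the truncated `2 * p - 1` is `0`, and `0‼ = 1` is the right value.
lemma Nat.factorial_two_mul_eq_doubleFactorial_mul (p : ℕ) :
    (2 * p)! = (2 * p - 1)‼ * (2 ^ p * p !) := by
  rcases p with _ | q
  · rfl
  · rw [← doubleFactorial_two_mul, show 2 * (q + 1) = (2 * q + 1) + 1 by ring,
      factorial_eq_mul_doubleFactorial, Nat.add_sub_cancel, mul_comm]

lemma Nat.factorial_two_mul_div_eq_doubleFactorial (p : ℕ) :
    (2 * p)! / (2 ^ p * p !) = (2 * p - 1)‼ :=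
  Nat.div_eq_of_eq_mul_left (by positivity) (factorial_two_mul_eq_doubleFactorial_mul p)

lemma Nat.multinomial_le_factorial {ι : Type*} (s : Finset ι) (k : ι → ℕ) :
    multinomial s k ≤ (∑ i ∈ s, k i)! :=
  Nat.le_of_dvd (factorial_pos _) (Dvd.intro_left _ (multinomial_spec s k))

lemma Nat.multinomial_two_nsmul_mul_prod_doubleFactorial {ι : Type*} (s : Finset ι) (k : ι → ℕ) :
    multinomial s (2 • k) * ∏ i ∈ s, (2 * k i - 1)‼ =
      (2 * ∑ i ∈ s, k i - 1)‼ * multinomial s k := by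
  have h2k := multinomial_spec s (2 • k)
  have hk := multinomial_spec s k
  simp only [Pi.smul_apply, smul_eq_mul, ← mul_sum, factorial_two_mul_eq_doubleFactorial_mul,
    prod_mul_distrib, prod_pow_eq_pow_sum] at h2k
  rw [← hk] at h2k
  have hpos : 0 < (2 ^ ∑ i ∈ s, k i) * ∏ i ∈ s, (k i)! := by positivity
  apply Nat.eq_of_mul_eq_mul_left hpos
  linear_combination h2k

lemma Nat.multinomial_two_nsmul_le {ι : Type*} (s : Finset ι) (k : ι → ℕ) :
    multinomial s (2 • k) ≤ (2 * ∑ i ∈ s, k i - 1)‼ * multinomial s k := by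
  rw [← multinomial_two_nsmul_mul_prod_doubleFactorial]
  exact Nat.le_mul_of_pos_right _ (prod_pos fun i _ => doubleFactorial_pos _)

lemma Nat.multinomial_two_nsmul_of_le_one {ι : Type*} {s : Finset ι} {k : ι → ℕ}
    (hk : ∀ i ∈ s, k i ≤ 1) :
    multinomial s (2 • k) = (2 * ∑ i ∈ s, k i - 1)‼ * multinomial s k := by
  rw [← multinomial_two_nsmul_mul_prod_doubleFactorial, prod_eq_one, mul_one]
  intro i hi
  have := hk i hi
  interval_cases k i <;> rfl

lemma sgn_sq (b : Bool) : sgn b ^ 2 = 1 := by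
  cases b <;> norm_num [sgn]

lemma sum_sgn_mul_pow (x : ℝ) (m : ℕ) :
    ∑ b : Bool, (sgn b * x) ^ m = if 2 ∣ m then 2 * x ^ m else 0 := by
  rcases Nat.even_or_odd m with h | h
  · simp [sgn, h.neg_pow, two_mul, h.two_dvd]
  · simp [sgn, h.neg_pow, ← even_iff_two_dvd, Nat.not_even_iff_odd.2 h]

section Rademacher

variable {ι : Type*} [Fintype ι] [DecidableEq ι]

lemma sum_prod_sgn_mul_pow (c : ι → ℝ) (m : ι → ℕ) :
    ∑ δ : ι → Bool, ∏ j, (sgn (δ j) * c j) ^ m j =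
      if ∀ j, 2 ∣ m j then 2 ^ Fintype.card ι * ∏ j, c j ^ m j else 0 := by
  rw [← Fintype.prod_sum fun j b => (sgn b * c j) ^ m j]
  simp_rw [sum_sgn_mul_pow]
  split_ifs with h
  · rw [prod_congr rfl fun j _ => if_pos (h j), prod_mul_distrib, prod_const, Finset.card_univ]
  · obtain ⟨j, hj⟩ := not_forall.1 h
    exact prod_eq_zero (mem_univ j) (if_neg hj)

/-- Multinomial expansion of `𝔼[(∑ j, δ j * c j) ^ (2 * p)]` for independent uniform signs `δ j`,
written in the variables `x = c ^ 2`: only the even exponent vectors `2 • k` survive. -/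
def rademacherMoment (x : ι → ℝ) (p : ℕ) : ℝ :=
  ∑ k ∈ piAntidiag univ p, (Nat.multinomial univ (2 • k) : ℝ) * ∏ j, x j ^ k j

lemma sum_sgn_mul_sum_pow_two_mul (c : ι → ℝ) (p : ℕ) :
    ∑ δ : ι → Bool, (∑ j, sgn (δ j) * c j) ^ (2 * p) =
      2 ^ Fintype.card ι * rademacherMoment (fun j => c j ^ 2) p := by
  simp_rw [sum_pow_eq_sum_piAntidiag]
  rw [sum_comm]
  simp_rw [← mul_sum, sum_prod_sgn_mul_pow, mul_ite, mul_zero, ← sum_filter,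
    ← map_nsmul_piAntidiag_univ p two_ne_zero, sum_map, rademacherMoment, mul_sum]
  refine sum_congr rfl fun k _ => ?_
  simp only [Function.Embedding.coeFn_mk, Pi.smul_apply, smul_eq_mul, pow_mul]
  ring

lemma expect_sgn_mul_sum_pow_two_mul (c : ι → ℝ) (p : ℕ) :
    𝔼 δ : ι → Bool, (∑ j, sgn (δ j) * c j) ^ (2 * p) = rademacherMoment (fun j => c j ^ 2) p := by
  rw [Fintype.expect_eq_sum_div_card, sum_sgn_mul_sum_pow_two_mul]
  simp

lemma one_div_four_pow_mul_sum_sum_eq_expect_expect (F : (ι → Bool) → (ι → Bool) → ℝ) :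
    1 / (4 : ℝ) ^ Fintype.card ι * ∑ ε, ∑ δ, F ε δ = 𝔼 ε, 𝔼 δ, F ε δ := by
  simp only [Fintype.expect_eq_sum_div_card, ← sum_div, Fintype.card_fun, Fintype.card_bool]
  rw [show (4 : ℝ) = 2 * 2 by norm_num, mul_pow]
  push_cast
  field_simp

end Rademacher

section Moments

variable {ι : Type*} [Fintype ι] [DecidableEq ι] {x : ι → ℝ}

lemma sum_piAntidiag_prod_pow_le (hx : ∀ i, 0 ≤ x i) (q : ℕ) :
    ∑ k ∈ piAntidiag univ q, ∏ i, x i ^ k i ≤ (∑ i, x i) ^ q := by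
  rw [sum_pow_eq_sum_piAntidiag]
  refine sum_le_sum fun k _ => le_mul_of_one_le_left ?_ (mod_cast multinomial_pos _ _)
  exact prod_nonneg fun i _ => pow_nonneg (hx i) _

lemma filter_two_le_subset_image_add_single (q : ℕ) (j : ι) :
    {k ∈ piAntidiag (univ : Finset ι) (q + 2) | 2 ≤ k j} ⊆
      (piAntidiag univ q).image (· + Pi.single j 2) := by
  intro k hk
  simp only [mem_filter, mem_piAntidiag] at hk
  have hle : Pi.single j 2 ≤ k := by
    intro i; rcases eq_or_ne i j with rfl | hi <;> simp [*]
  refine mem_image.2 ⟨k - Pi.single j 2, ?_, tsub_add_cancel_of_le hle⟩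
  simp only [mem_piAntidiag, mem_univ, implies_true, and_true, Pi.sub_apply]
  rw [sum_tsub_distrib _ fun i _ => hle i, hk.1.1]
  simp

lemma sum_filter_two_le_prod_pow_mul_sq_le (hx : ∀ i, 0 ≤ x i) (p : ℕ) (j : ι) :
    (∑ k ∈ piAntidiag univ p with 2 ≤ k j, ∏ i, x i ^ k i) * (∑ i, x i) ^ 2 ≤
      x j ^ 2 * (∑ i, x i) ^ p := by
  have hS : 0 ≤ ∑ i, x i := sum_nonneg fun i _ => hx i
  obtain hp | ⟨q, rfl⟩ : p < 2 ∨ ∃ q, p = q + 2 :=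
    (lt_or_ge p 2).imp_right fun h => ⟨p - 2, by omega⟩
  · rw [sum_eq_zero, zero_mul]
    · exact mul_nonneg (sq_nonneg _) (pow_nonneg hS p)
    intro k hk
    simp only [mem_filter, mem_piAntidiag] at hk
    have hsum : ∑ i, k i = p := hk.1.1
    have := single_le_sum (fun i _ => Nat.zero_le (k i)) (mem_univ j)
    omega
  calc (∑ k ∈ piAntidiag univ (q + 2) with 2 ≤ k j, ∏ i, x i ^ k i) * (∑ i, x i) ^ 2
      ≤ (∑ k ∈ (piAntidiag univ q).image (· + Pi.single j 2), ∏ i, x i ^ k i) *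
          (∑ i, x i) ^ 2 := by
        refine mul_le_mul_of_nonneg_right (sum_le_sum_of_subset_of_nonneg
          (filter_two_le_subset_image_add_single q j) fun k _ _ => ?_)
          (pow_nonneg hS 2)
        exact prod_nonneg fun i _ => pow_nonneg (hx i) _
    _ = x j ^ 2 * (∑ k ∈ piAntidiag univ q, ∏ i, x i ^ k i) * (∑ i, x i) ^ 2 := by
        rw [sum_image fun _ _ _ _ h => add_right_cancel h, mul_sum]
        congr 1
        refine sum_congr rfl fun k _ => ?_
        simp only [Pi.add_apply, pow_add, prod_mul_distrib, Pi.single_apply, pow_ite, pow_zero,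
          Fintype.prod_ite_eq', mul_comm]
    _ ≤ x j ^ 2 * (∑ i, x i) ^ q * (∑ i, x i) ^ 2 := by
        gcongr
        exact sum_piAntidiag_prod_pow_le hx q
    _ = x j ^ 2 * (∑ i, x i) ^ (q + 2) := by ring

lemma doubleFactorial_mul_sum_pow_sub_rademacherMoment (x : ι → ℝ) (p : ℕ) :
    (2 * p - 1)‼ * (∑ i, x i) ^ p - rademacherMoment x p =
      ∑ k ∈ piAntidiag univ p,
        ((2 * p - 1)‼ * multinomial univ k - multinomial univ (2 • k) : ℝ) * ∏ i, x i ^ k i := by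
  simp only [rademacherMoment, sum_pow_eq_sum_piAntidiag, mul_sum, ← sum_sub_distrib]
  exact sum_congr rfl fun k _ => by ring

lemma rademacherMoment_le (hx : ∀ i, 0 ≤ x i) (p : ℕ) :
    rademacherMoment x p ≤ (2 * p - 1)‼ * (∑ i, x i) ^ p := by
  rw [← sub_nonneg, doubleFactorial_mul_sum_pow_sub_rademacherMoment]
  refine sum_nonneg fun k hk => mul_nonneg ?_ (prod_nonneg fun i _ => pow_nonneg (hx i) _)
  have := multinomial_two_nsmul_le univ k
  rw [(mem_piAntidiag.1 hk).1] at this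
  rw [sub_nonneg]
  exact_mod_cast this

omit [DecidableEq ι] in
lemma doubleFactorial_mul_multinomial_sub_multinomial_two_nsmul_le (k : ι → ℕ) :
    ((2 * ∑ i, k i - 1)‼ * multinomial univ k - multinomial univ (2 • k) : ℝ) ≤
      (2 * ∑ i, k i - 1)‼ * (∑ i, k i)! * #{j | 2 ≤ k j} := by
  by_cases hbad : ∃ j, 2 ≤ k j
  · obtain ⟨j, hj⟩ := hbad
    have hcard : (1 : ℝ) ≤ #{j | 2 ≤ k j} :=
      mod_cast card_pos.2 ⟨j, mem_filter.2 ⟨mem_univ j, hj⟩⟩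
    have hk : (multinomial univ k : ℝ) ≤ (∑ i, k i)! := mod_cast multinomial_le_factorial univ k
    have h2k : 0 ≤ (multinomial univ (2 • k) : ℝ) := Nat.cast_nonneg _
    calc _ ≤ ((2 * ∑ i, k i - 1)‼ * multinomial univ k : ℝ) := by linarith
      _ ≤ (2 * ∑ i, k i - 1)‼ * (∑ i, k i)! := by gcongr
      _ ≤ _ := le_mul_of_one_le_right (by positivity) hcard
  · simp only [not_exists, not_le] at hbad
    rw [multinomial_two_nsmul_of_le_one fun i _ => Nat.le_of_lt_succ (hbad i)]
    push_cast
    rw [sub_self]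
    positivity

lemma doubleFactorial_mul_sum_pow_sub_rademacherMoment_mul_sq_le (hx : ∀ i, 0 ≤ x i) (p : ℕ) :
    ((2 * p - 1)‼ * (∑ i, x i) ^ p - rademacherMoment x p) * (∑ i, x i) ^ 2 ≤
      (2 * p - 1)‼ * p ! * ((∑ i, x i ^ 2) * (∑ i, x i) ^ p) := by
  set t : (ι → ℕ) → ℝ := fun k => ∏ i, x i ^ k i
  have ht k : 0 ≤ t k := prod_nonneg fun i _ => pow_nonneg (hx i) _
  rw [doubleFactorial_mul_sum_pow_sub_rademacherMoment, sum_mul]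
  calc _ ≤ ∑ k ∈ piAntidiag univ p,
          (2 * p - 1)‼ * p ! * #{j | 2 ≤ k j} * t k * (∑ i, x i) ^ 2 := by
        refine sum_le_sum fun k hk => ?_
        have := doubleFactorial_mul_multinomial_sub_multinomial_two_nsmul_le k
        rw [(mem_piAntidiag.1 hk).1] at this
        gcongr
        exact ht k
    _ = (2 * p - 1)‼ * p ! *
          ∑ j, (∑ k ∈ piAntidiag univ p with 2 ≤ k j, t k) * (∑ i, x i) ^ 2 := by
        simp only [natCast_card_filter, sum_filter, sum_mul, mul_sum]
        rw [sum_comm]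
        exact sum_congr rfl fun j _ => sum_congr rfl fun k _ => by split_ifs <;> ring
    _ ≤ (2 * p - 1)‼ * p ! * ∑ j, x j ^ 2 * (∑ i, x i) ^ p := by
        refine mul_le_mul_of_nonneg_left (sum_le_sum fun j _ => ?_) (by positivity)
        exact sum_filter_two_le_prod_pow_mul_sq_le hx p j
    _ = _ := by rw [sum_mul]

lemma abs_rademacherMoment_div_sub_le (hx : ∀ i, 0 ≤ x i) (p : ℕ) (hS : 0 < ∑ i, x i) :
    |rademacherMoment x p / (∑ i, x i) ^ p - (2 * p - 1)‼| ≤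
      (2 * p - 1)‼ * p ! * (∑ i, x i ^ 2) / (∑ i, x i) ^ 2 := by
  have hle := rademacherMoment_le hx p
  have herr := doubleFactorial_mul_sum_pow_sub_rademacherMoment_mul_sq_le hx p
  rw [abs_sub_comm, abs_of_nonneg, sub_div' (by positivity),
    div_le_div_iff₀ (by positivity) (by positivity)]
  · linarith
  · rw [sub_nonneg, div_le_iff₀ (by positivity)]
    linarith

lemma expect_sum_sgn_mul_pow_four_le (a : ι → ℝ) :
    𝔼 ε : ι → Bool, (∑ i, sgn (ε i) * a i) ^ 4 ≤ 3 * (∑ i, a i ^ 2) ^ 2 := by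
  have := rademacherMoment_le (fun i => sq_nonneg (a i)) 2
  rw [← expect_sgn_mul_sum_pow_two_mul] at this
  norm_num at this
  exact this

end Moments

section Hadamard

open Matrix

variable {ι : Type*} [Fintype ι] [DecidableEq ι] {H : Matrix ι ι ℝ}

lemma mul_transpose_self_of_orthogonal_rows (hpm : ∀ i j, H i j = 1 ∨ H i j = -1)
    (horth : ∀ i j, i ≠ j → ∑ k, H i k * H j k = 0) :
    H * Hᵀ = (Fintype.card ι : ℝ) • 1 := by
  ext i j
  simp only [mul_apply, transpose_apply, Matrix.smul_apply, one_apply, smul_eq_mul]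
  split_ifs with hij
  · subst hij
    simp [mul_self_eq_one_iff.2 (hpm i _)]
  · simp [horth i j hij]

lemma sum_vecMul_sq_of_mul_transpose_self {n : ℝ} (hH : H * Hᵀ = n • 1) (s : ι → ℝ) :
    ∑ j, (s ᵥ* H) j ^ 2 = n * ∑ i, s i ^ 2 := by
  have h := dotProduct_mulVec s H (Hᵀ *ᵥ s)
  rw [mulVec_mulVec, hH, smul_mulVec, one_mulVec, dotProduct_smul, ← vecMul_transpose,
    transpose_transpose] at h
  simpa [dotProduct, sq] using h.symm

lemma sum_vecMul_sgn_sq (hpm : ∀ i j, H i j = 1 ∨ H i j = -1)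
    (horth : ∀ i j, i ≠ j → ∑ k, H i k * H j k = 0) (ε : ι → Bool) :
    ∑ j, ((sgn ∘ ε) ᵥ* H) j ^ 2 = (Fintype.card ι : ℝ) ^ 2 := by
  rw [sum_vecMul_sq_of_mul_transpose_self (mul_transpose_self_of_orthogonal_rows hpm horth)]
  simp only [Function.comp_apply, sgn_sq, sum_const, Finset.card_univ, nsmul_eq_mul, mul_one]
  ring

lemma expect_vecMul_sgn_pow_four_le (hpm : ∀ i j, H i j = 1 ∨ H i j = -1) (j : ι) :
    𝔼 ε : ι → Bool, ((sgn ∘ ε) ᵥ* H) j ^ 4 ≤ 3 * (Fintype.card ι : ℝ) ^ 2 := by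
  have hcol : ∑ i, H i j ^ 2 = Fintype.card ι := by
    simp [sq, mul_self_eq_one_iff.2 (hpm _ j)]
  have := expect_sum_sgn_mul_pow_four_le (H · j)
  rwa [hcol] at this

end Hadamard

section Glow

open Matrix

variable {ι : Type*} [Fintype ι] {H : Matrix ι ι ℝ}

def glow (H : Matrix ι ι ℝ) (ε δ : ι → Bool) : ℝ :=
  ∑ i, ∑ j, sgn (ε i) * sgn (δ j) * H i j

lemma glow_eq_sum_sgn_mul_vecMul (H : Matrix ι ι ℝ) (ε δ : ι → Bool) :
    glow H ε δ = ∑ j, sgn (δ j) * ((sgn ∘ ε) ᵥ* H) j := by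
  simp only [glow, vecMul, dotProduct, Function.comp_apply, mul_sum]
  rw [sum_comm]
  exact sum_congr rfl fun j _ => sum_congr rfl fun i _ => by ring

lemma abs_expect_glow_div_card_pow_sub_le [DecidableEq ι] [Nonempty ι]
    (hpm : ∀ i j, H i j = 1 ∨ H i j = -1)
    (horth : ∀ i j, i ≠ j → ∑ k, H i k * H j k = 0) (p : ℕ) :
    |𝔼 ε, 𝔼 δ, (glow H ε δ / Fintype.card ι) ^ (2 * p) - (2 * p - 1)‼| ≤
      3 * (2 * p - 1)‼ * p ! / Fintype.card ι := by
  set n : ℝ := (Fintype.card ι : ℝ)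
  have hn : 0 < n := Nat.cast_pos.2 Fintype.card_pos
  set c : (ι → Bool) → ι → ℝ := fun ε => (sgn ∘ ε) ᵥ* H
  have hc2 ε : ∑ j, c ε j ^ 2 = n ^ 2 := sum_vecMul_sgn_sq hpm horth ε
  have hc4 j : 𝔼 ε, c ε j ^ 4 ≤ 3 * n ^ 2 := expect_vecMul_sgn_pow_four_le hpm j
  have hinner ε : 𝔼 δ, (glow H ε δ / n) ^ (2 * p) =
      rademacherMoment (fun j => c ε j ^ 2) p / n ^ (2 * p) := by
    simp_rw [div_pow, ← expect_div, glow_eq_sum_sgn_mul_vecMul, expect_sgn_mul_sum_pow_two_mul]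
    rfl
  have hε ε : |rademacherMoment (fun j => c ε j ^ 2) p / n ^ (2 * p) - (2 * p - 1)‼| ≤
      (2 * p - 1)‼ * p ! * (∑ j, c ε j ^ 4) / n ^ 4 := by
    have := abs_rademacherMoment_div_sub_le (fun j => sq_nonneg (c ε j)) p
      (by rw [hc2]; positivity)
    simp only [hc2, ← pow_mul] at this
    norm_num at this
    exact this
  calc |𝔼 ε, 𝔼 δ, (glow H ε δ / n) ^ (2 * p) - (2 * p - 1)‼|
      = |𝔼 ε, (rademacherMoment (fun j => c ε j ^ 2) p / n ^ (2 * p) - (2 * p - 1)‼)| := by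
        simp_rw [hinner, expect_sub_distrib, Fintype.expect_const]
    _ ≤ 𝔼 ε, |rademacherMoment (fun j => c ε j ^ 2) p / n ^ (2 * p) - (2 * p - 1)‼| :=
        abs_expect_le _ _
    _ ≤ 𝔼 ε, (2 * p - 1)‼ * p ! * (∑ j, c ε j ^ 4) / n ^ 4 := expect_le_expect fun ε _ => hε ε
    _ = (2 * p - 1)‼ * p ! * (∑ j, 𝔼 ε, c ε j ^ 4) / n ^ 4 := by
        rw [← expect_div, ← mul_expect, expect_sum_comm]
    _ ≤ (2 * p - 1)‼ * p ! * (∑ j : ι, 3 * n ^ 2) / n ^ 4 := by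
        gcongr with j
        exact hc4 j
    _ = 3 * (2 * p - 1)‼ * p ! / n := by
        rw [sum_const, Finset.card_univ, nsmul_eq_mul]
        field_simp
        ring

end Glow

/-- Universality of the binary glow: for every `p` there is a constant `C` such
that for every real Hadamard matrix `H` of order `N ≥ 1`, the normalized moment
`E[(φ/N)^(2p)]` is within `C/N` of `(2p-1)!! = (2p)!/(2^p p!)`, the `2p`-th moment
of a standard real Gaussian. Hence `φ/N` is asymptotically Gaussian. -/
theorem binary_glow_universality (p : ℕ) :
    ∃ C : ℝ, ∀ N : ℕ, 1 ≤ N → ∀ H : Matrix (Fin N) (Fin N) ℝ,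
      (∀ i j, H i j = 1 ∨ H i j = -1) →
      (∀ i j, i ≠ j → ∑ k, H i k * H j k = 0) →
      |(1 / (4 : ℝ) ^ N) * ∑ ε : Fin N → Bool, ∑ δ : Fin N → Bool,
          ((∑ i, ∑ j, sgn (ε i) * sgn (δ j) * H i j) / N) ^ (2 * p) -
        ((Nat.factorial (2 * p) / (2 ^ p * Nat.factorial p) : ℕ) : ℝ)| ≤ C / N := by
  refine ⟨3 * (2 * p - 1)‼ * p !, fun N hN H hpm horth => ?_⟩
  have : Nonempty (Fin N) := ⟨⟨0, hN⟩⟩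
  have h := abs_expect_glow_div_card_pow_sub_le hpm horth p
  rw [← one_div_four_pow_mul_sum_sum_eq_expect_expect, Fintype.card_fin] at h
  rw [factorial_two_mul_div_eq_doubleFactorial]
  exact h
end

section
/- For a complex matrix H ∈ M_N(𝕋) with unimodular entries, the moments of |Ω|², where Ω(a,b) = Σ_{ij} a_i b_j H_{ij} with (a,b) Haar-uniform on 𝕋^N × 𝕋^N, are given by ∫ |Ω|^{2p} = Σ_{[i]=[j], [x]=[y]} (H_{i_1x_1}⋯H_{i_px_p})/(H_{j_1y_1}⋯H_{j_py_p}), where the sum is over multi-indices i,j,x,y ∈ {1,…,N}^p with [i]=[j] and [x]=[y] as multisets. -/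
open Finset MeasureTheory

/-- The point `e(u) = exp(2πiu)` of the unit circle. -/
noncomputable def e (u : ℝ) : ℂ := Complex.exp (2 * Real.pi * u * Complex.I)

/-- The cube `[0,1]^N`, parametrizing `𝕋^N` with its Haar probability measure. -/
def Box (N : ℕ) : Set (Fin N → ℝ) := Set.univ.pi fun _ => Set.Icc 0 1

/-!
Expanding `|Ω|^{2p} = Ω^p \overline{Ω}^p` turns the integrand into a finite sum of entries of `H`
times characters `s ↦ e(∑_r s_{i_r} - ∑_r s_{j_r})` of the torus (and likewise in `t`). Such a
character is `∏_k e((c_k - c'_k) s_k)`, where `c_k`, `c'_k` count the occurrences of `k` in `i`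
and `j`, so its integral is `1` if `[i] = [j]` and `0` otherwise.
-/

@[fun_prop]
lemma continuous_e : Continuous e := by unfold e; fun_prop

lemma e_add (u v : ℝ) : e (u + v) = e u * e v := by
  simp only [e, ← Complex.exp_add]; push_cast; ring_nf

lemma e_sum {ι : Type*} (s : Finset ι) (f : ι → ℝ) : e (∑ k ∈ s, f k) = ∏ k ∈ s, e (f k) := by
  simp only [e, ← Complex.exp_sum]; push_cast; simp only [sum_mul, mul_sum]

lemma conj_e (u : ℝ) : (starRingEnd ℂ) (e u) = e (-u) := by
  simp only [e, ← Complex.exp_conj, map_mul, Complex.conj_I, Complex.conj_ofReal, map_ofNat]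
  push_cast; ring_nf

lemma setIntegral_Icc_e_int_mul (c : ℤ) :
    ∫ u in Set.Icc (0 : ℝ) 1, e (c * u) = if c = 0 then 1 else 0 := by
  split_ifs with hc
  · simp [hc, e]
  have h2πc : 2 * Real.pi * Complex.I * c ≠ 0 := by simp [hc, Real.pi_ne_zero]
  have he : ∀ u : ℝ, e (c * u) = Complex.exp (2 * Real.pi * Complex.I * c * u) := fun u => by
    simp only [e]; push_cast; ring_nf
  rw [integral_Icc_eq_integral_Ioc, ← intervalIntegral.integral_of_le zero_le_one]
  simp only [he, integral_exp_mul_complex h2πc]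
  have hperiod : Complex.exp (2 * Real.pi * Complex.I * c) = 1 := by
    rw [← Complex.exp_int_mul_two_pi_mul_I c]; ring_nf
  simp [hperiod]

lemma isCompact_Box (N : ℕ) : IsCompact (Box N) := isCompact_univ_pi fun _ => isCompact_Icc

lemma setIntegral_Box_prod {N : ℕ} (f : Fin N → ℝ → ℂ) :
    ∫ s in Box N, ∏ k, f k (s k) = ∏ k, ∫ u in Set.Icc (0 : ℝ) 1, f k u := by
  rw [Box, volume_pi, Measure.restrict_pi_pi, integral_fintype_prod_eq_prod]

lemma setIntegral_Box_sum {N : ℕ} {κ : Type*} [Fintype κ] (f : κ → (Fin N → ℝ) → ℂ)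
    (hf : ∀ k, Continuous (f k)) :
    ∫ s in Box N, ∑ k, f k s = ∑ k, ∫ s in Box N, f k s :=
  integral_finsetSum _ fun k _ => (hf k).continuousOn.integrableOn_compact (isCompact_Box N)

lemma Multiset.sum_map_eq_sum_count_nsmul {ι M : Type*} [Fintype ι] [DecidableEq ι]
    [AddCommMonoid M] (m : Multiset ι) (f : ι → M) :
    (m.map f).sum = ∑ k, m.count k • f k := by
  rw [Finset.sum_multiset_map_count]
  exact sum_subset (subset_univ _) fun k _ hk => by
    rw [Multiset.count_eq_zero_of_notMem (by simpa using hk), zero_smul]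

lemma setIntegral_Box_e_sum_sub_sum {N : ℕ} (m m' : Multiset (Fin N)) :
    ∫ s in Box N, e ((m.map s).sum - (m'.map s).sum) = if m = m' then 1 else 0 := by
  classical
  have hexp : ∀ s : Fin N → ℝ, (m.map s).sum - (m'.map s).sum
      = ∑ k, (((m.count k : ℤ) - m'.count k : ℤ) : ℝ) * s k := fun s => by
    simp only [Multiset.sum_map_eq_sum_count_nsmul, nsmul_eq_mul, ← sum_sub_distrib]
    push_cast; simp only [sub_mul]
  simp only [hexp, e_sum]
  rw [setIntegral_Box_prod fun k u => e (((m.count k : ℤ) - m'.count k : ℤ) * u)]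
  simp only [setIntegral_Icc_e_int_mul, Fintype.prod_boole, sub_eq_zero, Nat.cast_inj,
    ← Multiset.ext]

lemma setIntegral_Box_e_sum_comp_sub {N : ℕ} {ι : Type*} [Fintype ι] (i j : ι → Fin N) :
    ∫ s in Box N, e (∑ r, s (i r) - ∑ r, s (j r)) =
      if univ.val.map i = univ.val.map j then 1 else 0 := by
  simp only [sum_eq_multiset_sum]
  simpa only [Multiset.map_map, Function.comp_def] using
    setIntegral_Box_e_sum_sub_sum (univ.val.map i) (univ.val.map j)

lemma sum_sum_pow {ι κ R : Type*} [Fintype ι] [Fintype κ] [CommSemiring R] (g : ι → κ → R)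
    (p : ℕ) : (∑ a, ∑ b, g a b) ^ p = ∑ i : Fin p → ι, ∑ x : Fin p → κ, ∏ r, g (i r) (x r) := by
  rw [← Fin.prod_const, Fintype.prod_sum]
  exact sum_congr rfl fun i _ => Fintype.prod_sum _

lemma Complex.ofReal_norm_pow_two_mul (z : ℂ) (p : ℕ) :
    ((‖z‖ ^ (2 * p) : ℝ) : ℂ) = z ^ p * (starRingEnd ℂ) z ^ p := by
  rw [← mul_pow, Complex.mul_conj, Complex.normSq_eq_norm_sq, pow_mul]; push_cast; rfl

lemma ofReal_norm_sum_e_mul_pow {N : ℕ} (p : ℕ) (H : Matrix (Fin N) (Fin N) ℂ)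
    (hH : ∀ a b, ‖H a b‖ = 1) (s t : Fin N → ℝ) :
    ((‖∑ a, ∑ b, e (s a) * e (t b) * H a b‖ ^ (2 * p) : ℝ) : ℂ) =
      ∑ i : Fin p → Fin N, ∑ j : Fin p → Fin N, ∑ x : Fin p → Fin N, ∑ y : Fin p → Fin N,
        (∏ r, H (i r) (x r)) / (∏ r, H (j r) (y r)) *
          e (∑ r, s (i r) - ∑ r, s (j r)) * e (∑ r, t (x r) - ∑ r, t (y r)) := by
  simp only [Complex.ofReal_norm_pow_two_mul, map_sum, map_mul, conj_e,
    ← Complex.inv_eq_conj (hH _ _), sum_sum_pow, sum_mul_sum]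
  refine sum_congr rfl fun i _ => sum_congr rfl fun j _ => sum_congr rfl fun x _ =>
    sum_congr rfl fun y _ => ?_
  simp only [sub_eq_add_neg, e_add, ← sum_neg_distrib, e_sum, div_eq_mul_inv,
    ← prod_inv_distrib, prod_mul_distrib]
  ring

/-- Moment formula for the glow of a unimodular matrix `H ∈ M_N(𝕋)`: with
`Ω(a,b) = ∑ a_i b_j H_{ij}` and `(a,b)` Haar-uniform on `𝕋^N × 𝕋^N`,
`∫ |Ω|^{2p}` equals the sum over multi-indices `i,j,x,y ∈ {1,…,N}^p` with
`[i]=[j]` and `[x]=[y]` as multisets of `(H_{i₁x₁}⋯H_{i_px_p})/(H_{j₁y₁}⋯H_{j_py_p})`. -/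
theorem complex_glow_moment_formula
    (N p : ℕ) (H : Matrix (Fin N) (Fin N) ℂ)
    (hH : ∀ i j, ‖H i j‖ = 1) :
    (∫ s in Box N, ∫ t in Box N,
        ((‖∑ i, ∑ j, e (s i) * e (t j) * H i j‖ ^ (2 * p) : ℝ) : ℂ)) =
      ∑ i : Fin p → Fin N, ∑ j : Fin p → Fin N,
        ∑ x : Fin p → Fin N, ∑ y : Fin p → Fin N,
          if Finset.univ.val.map i = Finset.univ.val.map j ∧
              Finset.univ.val.map x = Finset.univ.val.map y then
            (∏ r, H (i r) (x r)) / ∏ r, H (j r) (y r)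
          else 0 := by
  simp only [ofReal_norm_sum_e_mul_pow p H hH]
  simp (disch := fun_prop) only [setIntegral_Box_sum, integral_mul_const, integral_const_mul]
  simp only [setIntegral_Box_e_sum_comp_sub, mul_ite, mul_one, mul_zero, ← ite_and, and_comm]
end

section
/- Let G be a finite abelian group of order N with #{x ∈ G : 2x = 0} = 2^e. Then #{(i,j,k,l) ∈ G⁴ : i,j,k,l pairwise distinct and i + j = k + l} = N(N² − 4N + 2^e + 2). -/
/-!
A pairwise distinct solution of `i + j = k + l` is determined by `i ≠ j` and `k`, with
`l = i + j - k`; the remaining conditions `l ≠ i, j, k` say `k ≠ j, i` and `2k ≠ i + j`.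
Writing `t(c) = #{k | 2k = c}`, the number of admissible `k` is `N - 2 - t(i + j)`.
Summed over all pairs, `t(i + j)` contributes `N²` (for fixed `i`, the fibres of doubling
partition `G`), while on the diagonal `t(2i) = 2^e`, since `2i` lies in the image of the
doubling homomorphism. Hence the count is `(N² - N)(N - 2) - (N² - N·2^e)`.
-/

open Finset

section
variable {G : Type*} [AddCommGroup G] [Fintype G] [DecidableEq G]

def halves (c : G) : Finset G := {k | k + k = c}

@[simp] lemma mem_halves {c k : G} : k ∈ halves c ↔ k + k = c := by simp [halves]

lemma card_halves_add_self (i : G) : #(halves (i + i)) = #(halves (0 : G)) :=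
  AddMonoidHom.card_fiber_eq_of_mem_range (AddMonoidHom.id G + AddMonoidHom.id G)
    ⟨i, rfl⟩ ⟨0, add_zero 0⟩

lemma sum_card_halves : ∑ c : G, #(halves c) = Fintype.card G :=
  (card_eq_sum_card_fiberwise fun k _ => mem_univ (k + k)).symm

lemma sum_card_halves_add_left (i : G) : ∑ j : G, #(halves (i + j)) = Fintype.card G :=
  (Fintype.sum_equiv (Equiv.addLeft i) _ _ fun _ => rfl).trans sum_card_halves

lemma card_pair_union_halves {i j : G} (hij : i ≠ j) :
    #({i, j} ∪ halves (i + j)) = 2 + #(halves (i + j)) := by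
  rw [card_union_of_disjoint, card_pair hij]
  simp only [disjoint_left, mem_insert, mem_singleton, mem_halves]
  rintro k (rfl | rfl) hk <;> grind

lemma card_distinct_quadruples_eq_sum_offDiag :
    #{t : G × G × G × G | t.1 ≠ t.2.1 ∧ t.1 ≠ t.2.2.1 ∧ t.1 ≠ t.2.2.2 ∧
        t.2.1 ≠ t.2.2.1 ∧ t.2.1 ≠ t.2.2.2 ∧ t.2.2.1 ≠ t.2.2.2 ∧
        t.1 + t.2.1 = t.2.2.1 + t.2.2.2} =
      ∑ p ∈ (univ : Finset G).offDiag, #({p.1, p.2} ∪ halves (p.1 + p.2))ᶜ := by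
  rw [← card_sigma]
  refine card_nbij' (fun t => ⟨(t.1, t.2.1), t.2.2.1⟩)
    (fun s => (s.1.1, s.1.2, s.2, s.1.1 + s.1.2 - s.2)) ?_ ?_ ?_ ?_
  · rintro ⟨i, j, k, l⟩ ht
    simp only [mem_coe, mem_filter, mem_sigma, mem_offDiag, mem_univ, true_and, mem_compl,
      mem_union, mem_insert, mem_singleton, mem_halves] at ht ⊢
    grind
  · rintro ⟨⟨i, j⟩, k⟩ hs
    simp only [mem_coe, mem_filter, mem_sigma, mem_offDiag, mem_univ, true_and, mem_compl,
      mem_union, mem_insert, mem_singleton, mem_halves] at hs ⊢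
    grind
  · rintro ⟨i, j, k, l⟩ ht
    have hl : i + j - k = l := sub_eq_iff_eq_add'.mpr (mem_filter.mp ht).2.2.2.2.2.2.2
    simp [hl]
  · rintro ⟨⟨i, j⟩, k⟩ -
    rfl

end

lemma sum_offDiag_eq_sum_product_sub_sum_diag {α β : Type*} [DecidableEq α] [AddCommGroup β]
    (s : Finset α) (f : α × α → β) :
    ∑ p ∈ s.offDiag, f p = ∑ p ∈ s ×ˢ s, f p - ∑ a ∈ s, f (a, a) := by
  rw [← diag_union_offDiag, sum_union (disjoint_diag_offDiag s), sum_diag]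
  abel

lemma sum_offDiag_card_compl_pair_union_halves {G : Type*} [AddCommGroup G] [Fintype G]
    [DecidableEq G] :
    ((∑ p ∈ (univ : Finset G).offDiag, #({p.1, p.2} ∪ halves (p.1 + p.2))ᶜ : ℕ) : ℤ) =
      Fintype.card G *
        ((Fintype.card G : ℤ) ^ 2 - 4 * Fintype.card G + #(halves (0 : G)) + 2) := by
  have hcard : ∀ p ∈ (univ : Finset G).offDiag,
      (#({p.1, p.2} ∪ halves (p.1 + p.2))ᶜ : ℤ) =
        Fintype.card G - 2 - #(halves (p.1 + p.2)) := by
    rintro ⟨i, j⟩ hij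
    rw [card_compl, Nat.cast_sub (card_le_univ _), card_pair_union_halves (mem_offDiag.1 hij).2.2]
    push_cast
    ring
  push_cast
  rw [sum_congr rfl hcard, sum_offDiag_eq_sum_product_sub_sum_diag, sum_product]
  simp only [sum_sub_distrib, sum_const, card_univ, ← Nat.cast_sum, sum_card_halves_add_left,
    card_halves_add_self]
  ring

/-- For a finite abelian group `G` of order `N` with `#{x ∈ G : 2x = 0} = 2^e`,
the number of quadruples `(i,j,k,l) ∈ G⁴` of pairwise distinct elements with
`i + j = k + l` equals `N(N² − 4N + 2^e + 2)`. -/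
theorem count_quadruples_i_add_j_eq_k_add_l
    (G : Type*) [AddCommGroup G] [Fintype G] [DecidableEq G] (e : ℕ)
    (he : (Finset.univ.filter (fun x : G => x + x = 0)).card = 2 ^ e) :
    ((Finset.univ.filter (fun t : G × G × G × G =>
        t.1 ≠ t.2.1 ∧ t.1 ≠ t.2.2.1 ∧ t.1 ≠ t.2.2.2 ∧
        t.2.1 ≠ t.2.2.1 ∧ t.2.1 ≠ t.2.2.2 ∧ t.2.2.1 ≠ t.2.2.2 ∧
        t.1 + t.2.1 = t.2.2.1 + t.2.2.2)).card : ℤ) =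
      (Fintype.card G) *
        ((Fintype.card G : ℤ) ^ 2 - 4 * (Fintype.card G) + 2 ^ e + 2) := by
  have card_halves_zero : #(halves (0 : G)) = 2 ^ e := he
  rw [card_distinct_quadruples_eq_sum_offDiag, sum_offDiag_card_compl_pair_union_halves,
    card_halves_zero]
  push_cast
  rfl
end

section
/- Let G be a finite abelian group of order N with #{x ∈ G : 2x = 0} = 2^e. Then, for the partition of {1,2,3,4} into the two blocks {1,2},{3,4}, the number of pairs of multi-indices i,j ∈ G⁴ with [i]=[j] as multisets, i₁+i₂ = j₁+j₂ and i₃+i₄ = j₃+j₄ in G, equals N(4N³ − 11N + 2^e + 7). -/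
open Finset

set_option linter.unusedSectionVars false
set_option maxHeartbeats 1000000

section Aux


variable {G : Type*} [AddCommGroup G] [DecidableEq G]

/- ### Multiset helper lemmas -/

lemma pair_eq {x y p q : G} (h : ({x, y} : Multiset G) = {p, q}) :
    (p = x ∧ q = y) ∨ (p = y ∧ q = x) := by
  have hp : p ∈ ({x, y} : Multiset G) := by rw [h]; simp
  simp only [Multiset.insert_eq_cons, Multiset.mem_cons, Multiset.mem_singleton] at hp
  rcases hp with hp | hp
  · subst hp
    exact Or.inl ⟨rfl, by simpa using ((Multiset.cons_inj_right p).mp h).symm⟩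
  · subst hp
    rw [Multiset.pair_comm] at h
    exact Or.inr ⟨rfl, by simpa using ((Multiset.cons_inj_right p).mp h).symm⟩

lemma rot4_2 (a b c d : G) : ({a,b,c,d} : Multiset G) = b ::ₘ {a,c,d} := by
  simp only [Multiset.insert_eq_cons]
  rw [Multiset.cons_swap a b]

lemma rot4_3 (a b c d : G) : ({a,b,c,d} : Multiset G) = c ::ₘ {a,b,d} := by
  simp only [Multiset.insert_eq_cons]
  rw [Multiset.cons_swap b c, Multiset.cons_swap a c]

lemma rot4_4 (a b c d : G) : ({a,b,c,d} : Multiset G) = d ::ₘ {a,b,c} := by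
  simp only [Multiset.insert_eq_cons, ← Multiset.cons_zero]
  rw [Multiset.cons_swap c d, Multiset.cons_swap b d, Multiset.cons_swap a d]

lemma rot3_2 (a b c : G) : ({a,b,c} : Multiset G) = b ::ₘ {a,c} := by
  simp only [Multiset.insert_eq_cons]
  rw [Multiset.cons_swap a b]

lemma rot3_3 (a b c : G) : ({a,b,c} : Multiset G) = c ::ₘ {a,b} := by
  simp only [Multiset.insert_eq_cons, ← Multiset.cons_zero]
  rw [Multiset.cons_swap b c, Multiset.cons_swap a c]

lemma sw12 (a b c d : G) : ({a,b,c,d} : Multiset G) = {b,a,c,d} := by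
  simp only [Multiset.insert_eq_cons]
  rw [Multiset.cons_swap a b]

lemma sw34 (a b c d : G) : ({a,b,c,d} : Multiset G) = {a,b,d,c} := by
  simp only [Multiset.insert_eq_cons, ← Multiset.cons_zero]
  rw [Multiset.cons_swap c d]

lemma cr4 (a b c d : G) : ({a,b,c,d} : Multiset G) = {c,d,a,b} := by
  simp only [Multiset.insert_eq_cons, ← Multiset.cons_zero]
  rw [Multiset.cons_swap b c, Multiset.cons_swap a c, Multiset.cons_swap b d,
    Multiset.cons_swap a d]

lemma cons4 {a : G} {s t : Multiset G} (h : a ::ₘ s = a ::ₘ t) : s = t :=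
  (Multiset.cons_inj_right a).mp h

/- ### The key structural lemma -/

lemma key_fwd {a b c d a' b' c' d' : G}
    (hm : ({a, b, c, d} : Multiset G) = {a', b', c', d'})
    (h1 : a + b = a' + b') :
    (((a' = a ∧ b' = b) ∨ (a' = b ∧ b' = a)) ∧ ((c' = c ∧ d' = d) ∨ (c' = d ∧ d' = c))) ∨
    (((a' = c ∧ b' = d) ∨ (a' = d ∧ b' = c)) ∧ ((c' = a ∧ d' = b) ∨ (c' = b ∧ d' = a)) ∧
      a + b = c + d) := by
  have ha : a' = a ∨ a' = b ∨ a' = c ∨ a' = d := by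
    have : a' ∈ ({a, b, c, d} : Multiset G) := by rw [hm]; simp
    simpa using this
  rcases ha with ha | ha | ha | ha
  · -- a' = a
    rw [ha] at hm
    have hm3 : ({b, c, d} : Multiset G) = {b', c', d'} := cons4 hm
    have hb : b' = b ∨ b' = c ∨ b' = d := by
      have : b' ∈ ({b, c, d} : Multiset G) := by rw [hm3]; simp
      simpa using this
    rcases hb with hb | hb | hb
    · rw [hb] at hm3
      exact Or.inl ⟨Or.inl ⟨ha, hb⟩, pair_eq (cons4 hm3)⟩
    · have hbc : b = c := by rw [ha, hb] at h1; exact add_left_cancel h1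
      rw [hb, ← hbc] at hm3
      rcases pair_eq (cons4 hm3) with ⟨u, v⟩ | ⟨u, v⟩
      · exact Or.inl ⟨Or.inl ⟨ha, hb.trans hbc.symm⟩, Or.inl ⟨u.trans hbc, v⟩⟩
      · exact Or.inl ⟨Or.inl ⟨ha, hb.trans hbc.symm⟩, Or.inr ⟨u, v.trans hbc⟩⟩
    · have hbd : b = d := by rw [ha, hb] at h1; exact add_left_cancel h1
      rw [hb, ← hbd] at hm3
      rcases pair_eq (cons4 hm3) with ⟨u, v⟩ | ⟨u, v⟩
      · exact Or.inl ⟨Or.inl ⟨ha, hb.trans hbd.symm⟩, Or.inl ⟨u, v.trans hbd⟩⟩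
      · exact Or.inl ⟨Or.inl ⟨ha, hb.trans hbd.symm⟩, Or.inr ⟨u.trans hbd, v⟩⟩
  · -- a' = b
    rw [ha, rot4_2 a b c d] at hm
    have hm3 : ({a, c, d} : Multiset G) = {b', c', d'} := cons4 hm
    have hb : b' = a ∨ b' = c ∨ b' = d := by
      have : b' ∈ ({a, c, d} : Multiset G) := by rw [hm3]; simp
      simpa using this
    rcases hb with hb | hb | hb
    · rw [hb] at hm3
      exact Or.inl ⟨Or.inr ⟨ha, hb⟩, pair_eq (cons4 hm3)⟩
    · have hac : a = c := by rw [ha, hb, add_comm a b] at h1; exact add_left_cancel h1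
      rw [hb, ← hac] at hm3
      rcases pair_eq (cons4 hm3) with ⟨u, v⟩ | ⟨u, v⟩
      · exact Or.inl ⟨Or.inr ⟨ha, hb.trans hac.symm⟩, Or.inl ⟨u.trans hac, v⟩⟩
      · exact Or.inl ⟨Or.inr ⟨ha, hb.trans hac.symm⟩, Or.inr ⟨u, v.trans hac⟩⟩
    · have had : a = d := by rw [ha, hb, add_comm a b] at h1; exact add_left_cancel h1
      rw [hb, ← had] at hm3
      rcases pair_eq (cons4 hm3) with ⟨u, v⟩ | ⟨u, v⟩
      · exact Or.inl ⟨Or.inr ⟨ha, hb.trans had.symm⟩, Or.inl ⟨u, v.trans had⟩⟩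
      · exact Or.inl ⟨Or.inr ⟨ha, hb.trans had.symm⟩, Or.inr ⟨u.trans had, v⟩⟩
  · -- a' = c
    rw [ha, rot4_3 a b c d] at hm
    have hm3 : ({a, b, d} : Multiset G) = {b', c', d'} := cons4 hm
    have hb : b' = a ∨ b' = b ∨ b' = d := by
      have : b' ∈ ({a, b, d} : Multiset G) := by rw [hm3]; simp
      simpa using this
    rcases hb with hb | hb | hb
    · have hbc : b = c := by rw [ha, hb, add_comm c a] at h1; exact add_left_cancel h1
      rw [hb] at hm3
      rcases pair_eq (cons4 hm3) with ⟨u, v⟩ | ⟨u, v⟩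
      · exact Or.inl ⟨Or.inr ⟨ha.trans hbc.symm, hb⟩, Or.inl ⟨u.trans hbc, v⟩⟩
      · exact Or.inl ⟨Or.inr ⟨ha.trans hbc.symm, hb⟩, Or.inr ⟨u, v.trans hbc⟩⟩
    · have hac : a = c := by rw [ha, hb] at h1; exact add_right_cancel h1
      rw [hb, rot3_2 a b d] at hm3
      rcases pair_eq (cons4 hm3) with ⟨u, v⟩ | ⟨u, v⟩
      · exact Or.inl ⟨Or.inl ⟨ha.trans hac.symm, hb⟩, Or.inl ⟨u.trans hac, v⟩⟩
      · exact Or.inl ⟨Or.inl ⟨ha.trans hac.symm, hb⟩, Or.inr ⟨u, v.trans hac⟩⟩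
    · rw [hb, rot3_3 a b d] at hm3
      rw [ha, hb] at h1
      exact Or.inr ⟨Or.inl ⟨ha, hb⟩, pair_eq (cons4 hm3), h1⟩
  · -- a' = d
    rw [ha, rot4_4 a b c d] at hm
    have hm3 : ({a, b, c} : Multiset G) = {b', c', d'} := cons4 hm
    have hb : b' = a ∨ b' = b ∨ b' = c := by
      have : b' ∈ ({a, b, c} : Multiset G) := by rw [hm3]; simp
      simpa using this
    rcases hb with hb | hb | hb
    · have hbd : b = d := by rw [ha, hb, add_comm d a] at h1; exact add_left_cancel h1
      rw [hb] at hm3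
      rcases pair_eq (cons4 hm3) with ⟨u, v⟩ | ⟨u, v⟩
      · exact Or.inl ⟨Or.inr ⟨ha.trans hbd.symm, hb⟩, Or.inr ⟨u.trans hbd, v⟩⟩
      · exact Or.inl ⟨Or.inr ⟨ha.trans hbd.symm, hb⟩, Or.inl ⟨u, v.trans hbd⟩⟩
    · have had : a = d := by rw [ha, hb] at h1; exact add_right_cancel h1
      rw [hb, rot3_2 a b c] at hm3
      rcases pair_eq (cons4 hm3) with ⟨u, v⟩ | ⟨u, v⟩
      · exact Or.inl ⟨Or.inl ⟨ha.trans had.symm, hb⟩, Or.inr ⟨u.trans had, v⟩⟩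
      · exact Or.inl ⟨Or.inl ⟨ha.trans had.symm, hb⟩, Or.inl ⟨u, v.trans had⟩⟩
    · rw [hb, rot3_3 a b c] at hm3
      rw [ha, hb] at h1
      exact Or.inr ⟨Or.inr ⟨ha, hb⟩, pair_eq (cons4 hm3), h1.trans (add_comm d c)⟩

lemma key_bwd {a b c d a' b' c' d' : G}
    (h : (((a' = a ∧ b' = b) ∨ (a' = b ∧ b' = a)) ∧
          ((c' = c ∧ d' = d) ∨ (c' = d ∧ d' = c))) ∨
         (((a' = c ∧ b' = d) ∨ (a' = d ∧ b' = c)) ∧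
          ((c' = a ∧ d' = b) ∨ (c' = b ∧ d' = a)) ∧ a + b = c + d)) :
    ({a, b, c, d} : Multiset G) = {a', b', c', d'} ∧ a + b = a' + b' ∧ c + d = c' + d' := by
  rcases h with ⟨h1 | h1, h2 | h2⟩ | ⟨h1 | h1, h2 | h2, hs⟩ <;>
    rw [h1.1, h1.2, h2.1, h2.2]
  · exact ⟨rfl, rfl, rfl⟩
  · exact ⟨sw34 a b c d, rfl, add_comm c d⟩
  · exact ⟨sw12 a b c d, add_comm a b, rfl⟩
  · exact ⟨(sw12 a b c d).trans (sw34 b a c d), add_comm a b, add_comm c d⟩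
  · exact ⟨cr4 a b c d, hs, hs.symm⟩
  · exact ⟨(cr4 a b c d).trans (sw34 c d a b), hs, hs.symm.trans (add_comm a b)⟩
  · exact ⟨(cr4 a b c d).trans (sw12 c d a b), hs.trans (add_comm c d), hs.symm⟩
  · exact ⟨((cr4 a b c d).trans (sw12 c d a b)).trans (sw34 d c a b),
      hs.trans (add_comm c d), hs.symm.trans (add_comm a b)⟩

/- ### The pair relation and counting lemmas -/

def pR (u w : G × G) : Prop := (w.1 = u.1 ∧ w.2 = u.2) ∨ (w.1 = u.2 ∧ w.2 = u.1)

instance instDecidablePR (u w : G × G) : Decidable (pR u w) := by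
  unfold pR; infer_instance

lemma pR_symm {u v : G × G} (h : pR u v) : pR v u := by
  rcases h with ⟨h1, h2⟩ | ⟨h1, h2⟩
  · exact Or.inl ⟨h1.symm, h2.symm⟩
  · exact Or.inr ⟨h2.symm, h1.symm⟩

lemma pR_trans {u v w : G × G} (h : pR u v) (h' : pR v w) : pR u w := by
  rcases h with ⟨h1, h2⟩ | ⟨h1, h2⟩ <;> rcases h' with ⟨h3, h4⟩ | ⟨h3, h4⟩
  · exact Or.inl ⟨h3.trans h1, h4.trans h2⟩
  · exact Or.inr ⟨h3.trans h2, h4.trans h1⟩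
  · exact Or.inr ⟨h3.trans h1, h4.trans h2⟩
  · exact Or.inl ⟨h3.trans h2, h4.trans h1⟩

lemma pR_sum {u v : G × G} (h : pR u v) : u.1 + u.2 = v.1 + v.2 := by
  rcases h with ⟨h1, h2⟩ | ⟨h1, h2⟩
  · rw [h1, h2]
  · rw [h1, h2, add_comm]

lemma pR_inter {u v u' v' : G × G} :
    ((pR u u' ∧ pR v v') ∧ (pR v u' ∧ pR u v' ∧ u.1 + u.2 = v.1 + v.2)) ↔
    (pR u v ∧ pR u u' ∧ pR u v') := by
  constructor
  · rintro ⟨⟨h1, h2⟩, h3, h4, h5⟩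
    exact ⟨pR_trans h1 (pR_symm h3), h1, h4⟩
  · rintro ⟨h1, h2, h3⟩
    exact ⟨⟨h2, pR_trans (pR_symm h1) h3⟩, pR_trans (pR_symm h1) h2, h3, pR_sum h1⟩

variable [Fintype G]

lemma ite_and_mul (P Q : Prop) [Decidable P] [Decidable Q] :
    (if P ∧ Q then (1 : ℤ) else 0) = (if P then (1 : ℤ) else 0) * (if Q then (1 : ℤ) else 0) := by
  by_cases hP : P <;> by_cases hQ : Q <;> simp [hP, hQ]

lemma cardZ {α : Type*} [Fintype α] (p : α → Prop) [DecidablePred p] :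
    ((Finset.univ.filter p).card : ℤ) = ∑ a : α, if p a then (1 : ℤ) else 0 := by
  rw [Finset.card_filter]
  push_cast
  rfl

lemma sum_pR (u : G × G) :
    ∑ w : G × G, (if pR u w then (1 : ℤ) else 0) =
      2 - (if u.1 = u.2 then (1 : ℤ) else 0) := by
  by_cases h : u.1 = u.2
  · have heq : ∀ w : G × G, pR u w ↔ w = u := by
      intro w; simp [pR, Prod.ext_iff, h, and_comm]
    simp only [heq]
    rw [Finset.sum_ite_eq' Finset.univ u (fun _ => (1 : ℤ))]
    simp [h]
  · have hne : u ≠ u.swap := by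
      intro hh
      have := Prod.ext_iff.mp hh
      exact h this.1
    have heq : ∀ w : G × G,
        (if pR u w then (1 : ℤ) else 0) =
          (if w = u then (1 : ℤ) else 0) + (if w = u.swap then (1 : ℤ) else 0) := by
      intro w
      by_cases h1 : w = u <;> by_cases h2 : w = u.swap
      · exact absurd (h1.symm.trans h2) hne
      · subst h1; simp [pR, h2]
      · subst h2; simp [pR, h1]
      · have hnp : ¬ pR u w := by
          rintro (⟨e1, e2⟩ | ⟨e1, e2⟩)
          · exact h1 (by simp [Prod.ext_iff, e1, e2])
          · exact h2 (by simp [Prod.ext_iff, e1, e2])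
        simp [hnp, h1, h2]
    rw [Finset.sum_congr rfl (fun w _ => heq w), Finset.sum_add_distrib,
      Finset.sum_ite_eq' Finset.univ u (fun _ => (1 : ℤ)),
      Finset.sum_ite_eq' Finset.univ u.swap (fun _ => (1 : ℤ))]
    simp [h]

lemma sum_pR' (a b : G) :
    (∑ p : G, ∑ q : G, if pR (a, b) (p, q) then (1 : ℤ) else 0) =
      2 - (if a = b then (1 : ℤ) else 0) := by
  have h := sum_pR (G := G) (a, b)
  simp only [Fintype.sum_prod_type] at h
  exact h

lemma hS' : (∑ p : G, ∑ q : G, (2 - (if p = q then (1 : ℤ) else 0)))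
    = 2 * (Fintype.card G : ℤ) ^ 2 - Fintype.card G := by
  have h1 : ∀ p : G, (∑ q : G, (2 - (if p = q then (1 : ℤ) else 0)))
      = 2 * (Fintype.card G : ℤ) - 1 := by
    intro p
    rw [Finset.sum_sub_distrib, Finset.sum_const,
      Finset.sum_ite_eq Finset.univ p (fun _ => (1 : ℤ))]
    simp [card_univ]
    ring
  simp only [h1]
  rw [Finset.sum_const]
  simp [card_univ]
  ring

lemma countQ1 :
    ((Finset.univ.filter (fun w : (G×G) × (G×G) × (G×G) × (G×G) =>
      pR w.1 w.2.2.1 ∧ pR w.2.1 w.2.2.2)).card : ℤ)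
    = (2 * (Fintype.card G : ℤ) ^ 2 - Fintype.card G) ^ 2 := by
  rw [cardZ]
  simp only [Fintype.sum_prod_type]
  have e1 : ∀ x x1 x2 x3 x4 x5 : G,
      (∑ x6 : G, ∑ x7 : G, if pR (x,x1) (x4,x5) ∧ pR (x2,x3) (x6,x7) then (1:ℤ) else 0)
      = (if pR (x,x1) (x4,x5) then (1:ℤ) else 0) * (2 - if x2 = x3 then (1:ℤ) else 0) := by
    intro x x1 x2 x3 x4 x5
    simp only [ite_and_mul]
    simp only [← Finset.mul_sum]
    rw [sum_pR']
  simp only [e1]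
  have e2 : ∀ x x1 x2 x3 : G,
      (∑ x4 : G, ∑ x5 : G,
        (if pR (x,x1) (x4,x5) then (1:ℤ) else 0) * (2 - if x2 = x3 then (1:ℤ) else 0))
      = (2 - if x = x1 then (1:ℤ) else 0) * (2 - if x2 = x3 then (1:ℤ) else 0) := by
    intro x x1 x2 x3
    simp only [← Finset.sum_mul]
    rw [sum_pR']
  simp only [e2]
  have e3 : ∀ x x1 : G,
      (∑ x2 : G, ∑ x3 : G,
        (2 - if x = x1 then (1:ℤ) else 0) * (2 - if x2 = x3 then (1:ℤ) else 0))
      = (2 - if x = x1 then (1:ℤ) else 0)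
        * (2 * (Fintype.card G : ℤ) ^ 2 - Fintype.card G) := by
    intro x x1
    simp only [← Finset.mul_sum]
    rw [hS']
  simp only [e3]
  simp only [← Finset.sum_mul]
  rw [hS']
  ring

lemma countQ12 :
    ((Finset.univ.filter (fun w : (G×G) × (G×G) × (G×G) × (G×G) =>
      pR w.1 w.2.1 ∧ pR w.1 w.2.2.1 ∧ pR w.1 w.2.2.2)).card : ℤ)
    = 8 * (Fintype.card G : ℤ) ^ 2 - 7 * Fintype.card G := by
  rw [cardZ]
  simp only [Fintype.sum_prod_type]
  have e1 : ∀ x x1 x2 x3 x4 x5 : G,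
      (∑ x6 : G, ∑ x7 : G,
        if pR (x,x1) (x2,x3) ∧ pR (x,x1) (x4,x5) ∧ pR (x,x1) (x6,x7) then (1:ℤ) else 0)
      = (if pR (x,x1) (x2,x3) then (1:ℤ) else 0) *
          ((if pR (x,x1) (x4,x5) then (1:ℤ) else 0) * (2 - if x = x1 then (1:ℤ) else 0)) := by
    intro x x1 x2 x3 x4 x5
    simp only [ite_and_mul]
    simp only [← Finset.mul_sum]
    rw [sum_pR']
  simp only [e1]
  have e2 : ∀ x x1 x2 x3 : G,
      (∑ x4 : G, ∑ x5 : G,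
        (if pR (x,x1) (x2,x3) then (1:ℤ) else 0) *
          ((if pR (x,x1) (x4,x5) then (1:ℤ) else 0) * (2 - if x = x1 then (1:ℤ) else 0)))
      = (if pR (x,x1) (x2,x3) then (1:ℤ) else 0) *
          ((2 - if x = x1 then (1:ℤ) else 0) * (2 - if x = x1 then (1:ℤ) else 0)) := by
    intro x x1 x2 x3
    simp only [← Finset.mul_sum]
    simp only [← Finset.sum_mul]
    rw [sum_pR']
  simp only [e2]
  have e3 : ∀ x x1 : G,
      (∑ x2 : G, ∑ x3 : G,
        (if pR (x,x1) (x2,x3) then (1:ℤ) else 0) *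
          ((2 - if x = x1 then (1:ℤ) else 0) * (2 - if x = x1 then (1:ℤ) else 0)))
      = (2 - if x = x1 then (1:ℤ) else 0) *
          ((2 - if x = x1 then (1:ℤ) else 0) * (2 - if x = x1 then (1:ℤ) else 0)) := by
    intro x x1
    simp only [← Finset.sum_mul]
    rw [sum_pR']
  simp only [e3]
  have e4 : ∀ x x1 : G,
      (2 - if x = x1 then (1:ℤ) else 0) *
          ((2 - if x = x1 then (1:ℤ) else 0) * (2 - if x = x1 then (1:ℤ) else 0))
      = 8 - 7 * (if x = x1 then (1:ℤ) else 0) := by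
    intro x x1
    by_cases h : x = x1 <;> simp [h] <;> norm_num
  simp only [e4]
  have e5 : ∀ x : G, (∑ x1 : G, (8 - 7 * (if x = x1 then (1:ℤ) else 0)))
      = 8 * (Fintype.card G : ℤ) - 7 := by
    intro x
    rw [Finset.sum_sub_distrib, Finset.sum_const, ← Finset.mul_sum,
      Finset.sum_ite_eq Finset.univ x (fun _ => (1 : ℤ))]
    simp [card_univ]
    ring
  simp only [e5]
  rw [Finset.sum_const]
  simp [card_univ]
  ring

lemma tor_count {e : ℕ}
    (he : (Finset.univ.filter (fun x : G => x + x = 0)).card = 2 ^ e) (x : G) :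
    (∑ y : G, if y + y = x + x then (1 : ℤ) else 0) = (2 : ℤ) ^ e := by
  rw [← cardZ]
  have hc : (Finset.univ.filter (fun y : G => y + y = x + x)).card
      = (Finset.univ.filter (fun z : G => z + z = 0)).card := by
    apply Finset.card_nbij' (i := fun y => y - x) (j := fun z => z + x)
    · intro y hy
      simp only [Finset.mem_coe, Finset.mem_filter, Finset.mem_univ, true_and] at hy ⊢
      have : y - x + (y - x) = (y + y) - (x + x) := by abel
      rw [this, hy, sub_self]
    · intro z hz
      simp only [Finset.mem_coe, Finset.mem_filter, Finset.mem_univ, true_and] at hz ⊢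
      have : z + x + (z + x) = (z + z) + (x + x) := by abel
      rw [this, hz, zero_add]
    · intro y _; simp
    · intro z _; simp
  rw [hc, he]
  push_cast
  ring

lemma countQ2 {e : ℕ}
    (he : (Finset.univ.filter (fun x : G => x + x = 0)).card = 2 ^ e) :
    ((Finset.univ.filter (fun w : (G×G) × (G×G) × (G×G) × (G×G) =>
      pR w.2.1 w.2.2.1 ∧ pR w.1 w.2.2.2 ∧ w.1.1 + w.1.2 = w.2.1.1 + w.2.1.2)).card : ℤ)
    = 4 * (Fintype.card G : ℤ) ^ 3 - 4 * (Fintype.card G : ℤ) ^ 2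
      + (Fintype.card G : ℤ) * 2 ^ e := by
  rw [cardZ]
  simp only [Fintype.sum_prod_type]
  have e1 : ∀ x x1 x2 x3 x4 x5 : G,
      (∑ x6 : G, ∑ x7 : G,
        if pR (x2,x3) (x4,x5) ∧ pR (x,x1) (x6,x7) ∧ x + x1 = x2 + x3 then (1:ℤ) else 0)
      = (if pR (x2,x3) (x4,x5) then (1:ℤ) else 0) *
          ((2 - if x = x1 then (1:ℤ) else 0) * (if x + x1 = x2 + x3 then (1:ℤ) else 0)) := by
    intro x x1 x2 x3 x4 x5
    simp only [ite_and_mul]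
    simp only [← Finset.mul_sum]
    simp only [← Finset.sum_mul]
    rw [sum_pR']
  simp only [e1]
  have e2 : ∀ x x1 x2 x3 : G,
      (∑ x4 : G, ∑ x5 : G,
        (if pR (x2,x3) (x4,x5) then (1:ℤ) else 0) *
          ((2 - if x = x1 then (1:ℤ) else 0) * (if x + x1 = x2 + x3 then (1:ℤ) else 0)))
      = (2 - if x2 = x3 then (1:ℤ) else 0) *
          ((2 - if x = x1 then (1:ℤ) else 0) * (if x + x1 = x2 + x3 then (1:ℤ) else 0)) := by
    intro x x1 x2 x3
    simp only [← Finset.sum_mul]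
    rw [sum_pR']
  simp only [e2]
  -- collapse x3
  have e3 : ∀ x x1 x2 : G,
      (∑ x3 : G,
        (2 - if x2 = x3 then (1:ℤ) else 0) *
          ((2 - if x = x1 then (1:ℤ) else 0) * (if x + x1 = x2 + x3 then (1:ℤ) else 0)))
      = (2 - if x2 + x2 = x + x1 then (1:ℤ) else 0) * (2 - if x = x1 then (1:ℤ) else 0) := by
    intro x x1 x2
    have hc : ∀ x3 : G, (x + x1 = x2 + x3) ↔ (x3 = x + x1 - x2) := by
      intro x3
      rw [eq_sub_iff_add_eq, add_comm x3 x2]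
      exact eq_comm
    simp only [hc]
    have hp : ∀ x3 : G,
        (2 - if x2 = x3 then (1:ℤ) else 0) *
          ((2 - if x = x1 then (1:ℤ) else 0) * (if x3 = x + x1 - x2 then (1:ℤ) else 0))
        = if x3 = x + x1 - x2 then
            (2 - if x2 = x3 then (1:ℤ) else 0) * (2 - if x = x1 then (1:ℤ) else 0) else 0 := by
      intro x3
      by_cases h : x3 = x + x1 - x2 <;> simp [h, mul_comm]
    simp only [hp]
    rw [Finset.sum_ite_eq' Finset.univ (x + x1 - x2)
      (fun x3 => (2 - if x2 = x3 then (1:ℤ) else 0) * (2 - if x = x1 then (1:ℤ) else 0))]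
    simp only [Finset.mem_univ, if_true, eq_sub_iff_add_eq]
  simp only [e3]
  have expand : ∀ a b : ℤ, (2 - a) * (2 - b) = 4 - 2 * a - 2 * b + a * b := by
    intro a b; ring
  simp only [expand]
  simp only [Finset.sum_add_distrib, Finset.sum_sub_distrib, ← Finset.mul_sum]
  have hN : ((Finset.univ : Finset G).card : ℤ) = (Fintype.card G : ℤ) := by
    rw [Finset.card_univ]
  have P0 : (∑ x : G, ∑ x1 : G, ∑ x2 : G, (4:ℤ)) = 4 * (Fintype.card G : ℤ) ^ 3 := by
    simp only [Finset.sum_const, Finset.card_univ, nsmul_eq_mul]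
    ring
  have hc2 : ∀ x x1 x2 : G, (x2 + x2 = x + x1) ↔ (x1 = x2 + x2 - x) := by
    intro x x1 x2
    constructor
    · intro h; rw [h]; abel
    · intro h; rw [h]; abel
  have P1 : (∑ x : G, ∑ x1 : G, ∑ x2 : G, (if x2 + x2 = x + x1 then (1:ℤ) else 0))
      = (Fintype.card G : ℤ) ^ 2 := by
    have hx : ∀ x : G, (∑ x1 : G, ∑ x2 : G, (if x2 + x2 = x + x1 then (1:ℤ) else 0))
        = (Fintype.card G : ℤ) := by
      intro x
      rw [Finset.sum_comm]
      simp only [hc2]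
      simp only [Finset.sum_ite_eq', Finset.mem_univ, if_true]
      simp [Finset.card_univ]
    simp only [hx]
    simp [Finset.card_univ]
    ring
  have P2 : (∑ x : G, ∑ x1 : G, ∑ x2 : G, (if x = x1 then (1:ℤ) else 0))
      = (Fintype.card G : ℤ) ^ 2 := by
    have hx : ∀ x : G, (∑ x1 : G, ∑ x2 : G, (if x = x1 then (1:ℤ) else 0))
        = (Fintype.card G : ℤ) := by
      intro x
      have : ∀ x1 : G, (∑ _x2 : G, (if x = x1 then (1:ℤ) else 0))
          = (Fintype.card G : ℤ) * (if x = x1 then (1:ℤ) else 0) := by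
        intro x1
        rw [Finset.sum_const, nsmul_eq_mul, Finset.card_univ]
      simp only [this]
      rw [← Finset.mul_sum, Finset.sum_ite_eq Finset.univ x (fun _ => (1:ℤ))]
      simp
    simp only [hx]
    simp [Finset.card_univ]
    ring
  have P3 : (∑ x : G, ∑ x1 : G, ∑ x2 : G,
        (if x2 + x2 = x + x1 then (1:ℤ) else 0) * (if x = x1 then (1:ℤ) else 0))
      = (Fintype.card G : ℤ) * 2 ^ e := by
    have hx : ∀ x : G, (∑ x1 : G, ∑ x2 : G,
          (if x2 + x2 = x + x1 then (1:ℤ) else 0) * (if x = x1 then (1:ℤ) else 0))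
        = (2:ℤ) ^ e := by
      intro x
      simp only [← Finset.sum_mul]
      have hp : ∀ x1 : G,
          (∑ x2 : G, (if x2 + x2 = x + x1 then (1:ℤ) else 0)) * (if x = x1 then (1:ℤ) else 0)
          = if x = x1 then (∑ x2 : G, (if x2 + x2 = x + x1 then (1:ℤ) else 0)) else 0 := by
        intro x1
        by_cases h : x = x1 <;> simp [h]
      simp only [hp]
      rw [Finset.sum_ite_eq Finset.univ x
        (fun x1 => ∑ x2 : G, (if x2 + x2 = x + x1 then (1:ℤ) else 0))]
      simp only [Finset.mem_univ, if_true]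
      exact tor_count he x
    simp only [hx]
    rw [Finset.sum_const, nsmul_eq_mul, Finset.card_univ]
  rw [P0, P1, P2, P3]
  ring

end Aux

/-- For a finite abelian group `G` of order `N` with `#{x ∈ G : 2x = 0} = 2^e`,
the Fourier glow integral `I(⊓⊓)` at the partition `{{1,2},{3,4}}` of `{1,2,3,4}`,
i.e. the number of pairs of multi-indices `i, j ∈ G⁴` with `[i] = [j]` as
multisets, `i₁+i₂ = j₁+j₂` and `i₃+i₄ = j₃+j₄`, equals `N(4N³ − 11N + 2^e + 7)`. -/
theorem I_two_blocks_eq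
    (G : Type*) [AddCommGroup G] [Fintype G] [DecidableEq G] (e : ℕ)
    (he : (Finset.univ.filter (fun x : G => x + x = 0)).card = 2 ^ e) :
    ((Finset.univ.filter (fun ij : (Fin 4 → G) × (Fin 4 → G) =>
        Finset.univ.val.map ij.1 = Finset.univ.val.map ij.2 ∧
        ij.1 0 + ij.1 1 = ij.2 0 + ij.2 1 ∧
        ij.1 2 + ij.1 3 = ij.2 2 + ij.2 3)).card : ℤ) =
      (Fintype.card G) *
        (4 * (Fintype.card G : ℤ) ^ 3 - 11 * (Fintype.card G) + 2 ^ e + 7) := by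
  have hbij : (Finset.univ.filter (fun ij : (Fin 4 → G) × (Fin 4 → G) =>
        Finset.univ.val.map ij.1 = Finset.univ.val.map ij.2 ∧
        ij.1 0 + ij.1 1 = ij.2 0 + ij.2 1 ∧
        ij.1 2 + ij.1 3 = ij.2 2 + ij.2 3)).card
      = (Finset.univ.filter (fun w : (G×G) × (G×G) × (G×G) × (G×G) =>
          (pR w.1 w.2.2.1 ∧ pR w.2.1 w.2.2.2) ∨
          (pR w.2.1 w.2.2.1 ∧ pR w.1 w.2.2.2 ∧ w.1.1 + w.1.2 = w.2.1.1 + w.2.1.2))).card := by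
    apply Finset.card_nbij'
      (i := fun ij => ((ij.1 0, ij.1 1), (ij.1 2, ij.1 3), (ij.2 0, ij.2 1), (ij.2 2, ij.2 3)))
      (j := fun w => (![w.1.1, w.1.2, w.2.1.1, w.2.1.2],
        ![w.2.2.1.1, w.2.2.1.2, w.2.2.2.1, w.2.2.2.2]))
    · rintro ⟨i, j⟩ h
      simp only [Finset.mem_coe, Finset.mem_filter, Finset.mem_univ, true_and] at h ⊢
      obtain ⟨hm, h1, h2⟩ := h
      have hm' : ({i 0, i 1, i 2, i 3} : Multiset G) = {j 0, j 1, j 2, j 3} := hm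
      exact key_fwd hm' h1
    · rintro ⟨⟨a, b⟩, ⟨c, d⟩, ⟨a', b'⟩, ⟨c', d'⟩⟩ h
      simp only [Finset.mem_coe, Finset.mem_filter, Finset.mem_univ, true_and] at h ⊢
      exact key_bwd h
    · rintro ⟨i, j⟩ _
      refine Prod.ext ?_ ?_ <;> funext k <;> fin_cases k <;> rfl
    · rintro ⟨⟨a, b⟩, ⟨c, d⟩, ⟨a', b'⟩, ⟨c', d'⟩⟩ _
      rfl
  rw [hbij]
  have hsplit : (Finset.univ.filter (fun w : (G×G) × (G×G) × (G×G) × (G×G) =>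
          (pR w.1 w.2.2.1 ∧ pR w.2.1 w.2.2.2) ∨
          (pR w.2.1 w.2.2.1 ∧ pR w.1 w.2.2.2 ∧ w.1.1 + w.1.2 = w.2.1.1 + w.2.1.2))).card
      + (Finset.univ.filter (fun w : (G×G) × (G×G) × (G×G) × (G×G) =>
          (pR w.1 w.2.2.1 ∧ pR w.2.1 w.2.2.2) ∧
          (pR w.2.1 w.2.2.1 ∧ pR w.1 w.2.2.2 ∧ w.1.1 + w.1.2 = w.2.1.1 + w.2.1.2))).card
      = (Finset.univ.filter (fun w : (G×G) × (G×G) × (G×G) × (G×G) =>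
          pR w.1 w.2.2.1 ∧ pR w.2.1 w.2.2.2)).card
      + (Finset.univ.filter (fun w : (G×G) × (G×G) × (G×G) × (G×G) =>
          pR w.2.1 w.2.2.1 ∧ pR w.1 w.2.2.2 ∧ w.1.1 + w.1.2 = w.2.1.1 + w.2.1.2)).card := by
    rw [Finset.filter_or (fun w : (G×G) × (G×G) × (G×G) × (G×G) =>
          pR w.1 w.2.2.1 ∧ pR w.2.1 w.2.2.2)
        (fun w : (G×G) × (G×G) × (G×G) × (G×G) =>
          pR w.2.1 w.2.2.1 ∧ pR w.1 w.2.2.2 ∧ w.1.1 + w.1.2 = w.2.1.1 + w.2.1.2)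
        Finset.univ,
      Finset.filter_and (fun w : (G×G) × (G×G) × (G×G) × (G×G) =>
          pR w.1 w.2.2.1 ∧ pR w.2.1 w.2.2.2)
        (fun w : (G×G) × (G×G) × (G×G) × (G×G) =>
          pR w.2.1 w.2.2.1 ∧ pR w.1 w.2.2.2 ∧ w.1.1 + w.1.2 = w.2.1.1 + w.2.1.2)
        Finset.univ]
    exact Finset.card_union_add_card_inter _ _
  have hinterfilter : (Finset.univ.filter (fun w : (G×G) × (G×G) × (G×G) × (G×G) =>
          (pR w.1 w.2.2.1 ∧ pR w.2.1 w.2.2.2) ∧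
          (pR w.2.1 w.2.2.1 ∧ pR w.1 w.2.2.2 ∧ w.1.1 + w.1.2 = w.2.1.1 + w.2.1.2)))
      = (Finset.univ.filter (fun w : (G×G) × (G×G) × (G×G) × (G×G) =>
          pR w.1 w.2.1 ∧ pR w.1 w.2.2.1 ∧ pR w.1 w.2.2.2)) := by
    apply Finset.filter_congr
    intro w _
    exact pR_inter
  rw [hinterfilter] at hsplit
  have hz : ((Finset.univ.filter (fun w : (G×G) × (G×G) × (G×G) × (G×G) =>
          (pR w.1 w.2.2.1 ∧ pR w.2.1 w.2.2.2) ∨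
          (pR w.2.1 w.2.2.1 ∧ pR w.1 w.2.2.2 ∧ w.1.1 + w.1.2 = w.2.1.1 + w.2.1.2))).card : ℤ)
      = (2 * (Fintype.card G : ℤ) ^ 2 - Fintype.card G) ^ 2
        + (4 * (Fintype.card G : ℤ) ^ 3 - 4 * (Fintype.card G : ℤ) ^ 2
            + (Fintype.card G : ℤ) * 2 ^ e)
        - (8 * (Fintype.card G : ℤ) ^ 2 - 7 * Fintype.card G) := by
    have := congrArg (fun n : ℕ => (n : ℤ)) hsplit
    push_cast at this
    rw [countQ1, countQ12, countQ2 he] at this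
    linarith
  rw [hz]
  ring
end
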